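/- Let φ be an Orlicz function taking only finite values, satisfying the Δ₂-condition at zero, and such that ∑_{n=n₁}^∞ φ(1/n) < ∞ for some n₁ ∈ ℕ. Then for every x ∈ ces_φ: ‖x‖_φ = 1 if and only if ρ_φ(x) = 1. -/

import Mathlib

open scoped ENNReal
open Filter

/-- An Orlicz function: `φ : ℝ → [0,∞]` even, convex, left continuous on `ℝ₊`,
continuous at zero, with `φ 0 = 0` and `φ u → ∞` as `u → ∞`. -/
structure OrliczFunction where
  toFun : ℝ → ℝ≥0∞
  even' : ∀ u : ℝ, toFun (-u) = toFun u
  convex' : ∀ u v t : ℝ, 0 ≤ t → t ≤ 1 →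
    toFun (t * u + (1 - t) * v) ≤ ENNReal.ofReal t * toFun u + ENNReal.ofReal (1 - t) * toFun v
  map_zero' : toFun 0 = 0
  leftContinuous' : ∀ t : ℝ, 0 < t → Tendsto toFun (nhdsWithin t (Set.Iio t)) (nhds (toFun t))
  continuousAtZero' : Tendsto toFun (nhds 0) (nhds 0)
  tendsto_top' : Tendsto toFun atTop (nhds ⊤)

/-- The Cesàro mean `σx(n) = (1/n) ∑_{j=1}^n |x j|` (with `0`-based indexing). -/
noncomputable def cesaroMean (x : ℕ → ℝ) (n : ℕ) : ℝ :=
  (∑ j ∈ Finset.range (n + 1), |x j|) / (n + 1)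

/-- The modular `ρ_φ(x) = ∑_i φ(σx(i))`. -/
noncomputable def rho (φ : OrliczFunction) (x : ℕ → ℝ) : ℝ≥0∞ :=
  ∑' n : ℕ, φ.toFun (cesaroMean x n)

/-- The Cesàro–Orlicz sequence space `ces_φ`. -/
def cesOrlicz (φ : OrliczFunction) : Set (ℕ → ℝ) :=
  {x | ∃ lam : ℝ, 0 < lam ∧ rho φ (fun i => lam * x i) < ⊤}

/-- The Luxemburg norm `‖x‖_φ = inf {λ > 0 : ρ_φ(x/λ) ≤ 1}`. -/
noncomputable def luxNorm (φ : OrliczFunction) (x : ℕ → ℝ) : ℝ :=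
  sInf {lam : ℝ | 0 < lam ∧ rho φ (fun i => x i / lam) ≤ 1}

/-- The subspace `A_φ` of `ces_φ`. -/
def Aphi (φ : OrliczFunction) : Set (ℕ → ℝ) :=
  {x | x ∈ cesOrlicz φ ∧ ∀ k : ℝ, 0 < k → ∃ nk : ℕ,
    ∑' n : ℕ, φ.toFun ((k / ((nk + n + 1 : ℕ) : ℝ)) * ∑ i ∈ Finset.range (nk + n + 1), |x i|) < ⊤}

/-- `∃ n₁, ∑_{n=n₁}^∞ φ(1/n) < ∞`. -/
def TailFinite (φ : OrliczFunction) : Prop :=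
  ∃ n₁ : ℕ, ∑' n : ℕ, φ.toFun (((n₁ + n + 1 : ℕ) : ℝ)⁻¹) < ⊤

/-- The `Δ₂`-condition at zero. -/
def Delta2Zero (φ : OrliczFunction) : Prop :=
  ∃ K : ℝ, 0 < K ∧ ∃ a : ℝ, 0 < a ∧ 0 < φ.toFun a ∧
    ∀ u : ℝ, 0 ≤ u → u ≤ a → φ.toFun (2 * u) ≤ ENNReal.ofReal K * φ.toFun u

/-- `φ` takes only finite values. -/
def FiniteValued (φ : OrliczFunction) : Prop := ∀ u : ℝ, φ.toFun u ≠ ⊤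


/-!
For `x ∈ ces_φ`, the `Δ₂`-condition at zero and finiteness of `φ` make `ρ_φ(μx)` finite for
every `μ ≥ 0`, so `g(μ) = ρ_φ(μx)` is a real convex function on `[0, ∞)` with `g(0) = 0`,
hence continuous at `1`. Since `‖x‖_φ = inf {λ > 0 : g(1/λ) ≤ 1}`, it remains to see that
this infimum is `1` exactly when `g(1) = 1`: convexity and `g(0) = 0` give `g(s) ≥ s g(1) > 1`
for `s > 1` when `g(1) = 1`, and conversely continuity at `1` rules out both `g(1) < 1` and
`g(1) > 1`.
-/

open Set Topology

namespace OrliczFunction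

variable (φ : OrliczFunction)

lemma monotoneOn : MonotoneOn φ.toFun (Ici 0) := by
  intro u hu v _ huv
  rcases (hu.trans huv).eq_or_lt with hv0 | hv0
  · rw [le_antisymm (huv.trans hv0.symm.le) hu, ← hv0]
  · have ht : u / v ≤ 1 := (div_le_one hv0).2 huv
    have h := φ.convex' v 0 (u / v) (div_nonneg hu hv0.le) ht
    rw [mul_zero, add_zero, div_mul_cancel₀ _ hv0.ne', φ.map_zero', mul_zero, add_zero] at h
    exact h.trans (mul_le_of_le_one_left' (ENNReal.ofReal_le_one.2 ht))

end OrliczFunction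

lemma ENNReal.tsum_ne_top_of_eventually_le {f g : ℕ → ℝ≥0∞} (hf : ∀ n, f n ≠ ⊤)
    (hg : ∑' n, g n ≠ ⊤) (hfg : ∀ᶠ n in atTop, f n ≤ g n) : ∑' n, f n ≠ ⊤ := by
  obtain ⟨N, hN⟩ := eventually_atTop.1 hfg
  rw [← ENNReal.summable.sum_add_tsum_nat_add' (k := N)]
  refine ENNReal.add_ne_top.2 ⟨ENNReal.sum_ne_top.2 fun n _ => hf n, ne_top_of_le_ne_top hg ?_⟩
  calc ∑' n, f (n + N) ≤ ∑' n, g (n + N) :=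
        ENNReal.tsum_le_tsum fun n => hN _ (Nat.le_add_left N n)
    _ ≤ ∑' n, g n := ENNReal.tsum_comp_le_tsum_of_injective (add_left_injective N) g

lemma cesaroMean_nonneg (x : ℕ → ℝ) (n : ℕ) : 0 ≤ cesaroMean x n :=
  div_nonneg (Finset.sum_nonneg fun _ _ => abs_nonneg _) (by positivity)

lemma cesaroMean_const_mul (x : ℕ → ℝ) {μ : ℝ} (hμ : 0 ≤ μ) (n : ℕ) :
    cesaroMean (fun i => μ * x i) n = μ * cesaroMean x n := by
  simp only [cesaroMean, abs_mul, abs_of_nonneg hμ, ← Finset.mul_sum, mul_div_assoc]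

lemma rho_const_mul_mono (φ : OrliczFunction) (x : ℕ → ℝ) {μ ν : ℝ} (hμ : 0 ≤ μ) (hμν : μ ≤ ν) :
    rho φ (fun i => μ * x i) ≤ rho φ (fun i => ν * x i) := by
  refine ENNReal.tsum_le_tsum fun n => ?_
  rw [cesaroMean_const_mul x hμ, cesaroMean_const_mul x (hμ.trans hμν)]
  have hσ := cesaroMean_nonneg x n
  exact φ.monotoneOn (mul_nonneg hμ hσ) (mul_nonneg (hμ.trans hμν) hσ)
    (mul_le_mul_of_nonneg_right hμν hσ)

/-- The `Δ₂`-condition applies to all but finitely many terms, since `φ(σx(n)) → 0` forces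
`σx(n) ≤ a` eventually; finiteness of `φ` handles the remaining ones. -/
lemma rho_two_mul_lt_top {φ : OrliczFunction} (hfin : FiniteValued φ) (hδ : Delta2Zero φ)
    {x : ℕ → ℝ} (hρ : rho φ x < ⊤) : rho φ (fun i => 2 * x i) < ⊤ := by
  obtain ⟨K, -, a, ha, hφa, hΔ⟩ := hδ
  have hsmall : ∀ᶠ n in atTop, cesaroMean x n ≤ a := by
    filter_upwards [(ENNReal.tendsto_atTop_zero_of_tsum_ne_top hρ.ne).eventually_lt_const hφa]
      with n hn
    by_contra! h
    exact (φ.monotoneOn ha.le (cesaroMean_nonneg x n) h.le).not_gt hn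
  refine lt_top_iff_ne_top.2 (ENNReal.tsum_ne_top_of_eventually_le (fun n => hfin _)
    (g := fun n => ENNReal.ofReal K * φ.toFun (cesaroMean x n)) ?_ ?_)
  · rw [ENNReal.tsum_mul_left]
    exact ENNReal.mul_ne_top ENNReal.ofReal_ne_top hρ.ne
  · filter_upwards [hsmall] with n hn
    rw [cesaroMean_const_mul x zero_le_two]
    exact hΔ _ (cesaroMean_nonneg x n) hn

lemma rho_const_mul_lt_top {φ : OrliczFunction} (hfin : FiniteValued φ) (hδ : Delta2Zero φ)
    {x : ℕ → ℝ} (hx : x ∈ cesOrlicz φ) {μ : ℝ} (hμ : 0 ≤ μ) :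
    rho φ (fun i => μ * x i) < ⊤ := by
  obtain ⟨lam, hlam, h⟩ := hx
  have hpow : ∀ k : ℕ, rho φ (fun i => 2 ^ k * lam * x i) < ⊤ := by
    intro k
    induction k with
    | zero => simpa using h
    | succ k ih =>
      simpa [pow_succ, mul_assoc, mul_comm, mul_left_comm] using rho_two_mul_lt_top hfin hδ ih
  obtain ⟨k, hk⟩ := pow_unbounded_of_one_lt (μ / lam) one_lt_two
  refine (rho_const_mul_mono φ x hμ ?_).trans_lt (hpow k)
  rw [div_lt_iff₀ hlam] at hk
  exact hk.le

lemma rho_convex_comb (φ : OrliczFunction) (x : ℕ → ℝ) {μ ν a b : ℝ} (hμ : 0 ≤ μ) (hν : 0 ≤ ν)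
    (ha : 0 ≤ a) (hb : 0 ≤ b) (hab : a + b = 1) :
    rho φ (fun i => (a * μ + b * ν) * x i) ≤
      ENNReal.ofReal a * rho φ (fun i => μ * x i) + ENNReal.ofReal b * rho φ (fun i => ν * x i) := by
  rw [rho, rho, rho, ← ENNReal.tsum_mul_left, ← ENNReal.tsum_mul_left, ← ENNReal.tsum_add]
  refine ENNReal.tsum_le_tsum fun n => ?_
  obtain rfl : b = 1 - a := by linarith
  rw [cesaroMean_const_mul x (by positivity), cesaroMean_const_mul x hμ,
    cesaroMean_const_mul x hν, add_mul, mul_assoc, mul_assoc]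
  exact φ.convex' _ _ a ha (by linarith)

noncomputable def rhoRay (φ : OrliczFunction) (x : ℕ → ℝ) (μ : ℝ) : ℝ :=
  (rho φ (fun i => μ * x i)).toReal

lemma rhoRay_zero (φ : OrliczFunction) (x : ℕ → ℝ) : rhoRay φ x 0 = 0 := by
  simp [rhoRay, rho, cesaroMean, φ.map_zero']

lemma convexOn_rhoRay {φ : OrliczFunction} (hfin : FiniteValued φ) (hδ : Delta2Zero φ)
    {x : ℕ → ℝ} (hx : x ∈ cesOrlicz φ) : ConvexOn ℝ (Ici 0) (rhoRay φ x) := by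
  refine ⟨convex_Ici 0, fun μ hμ ν hν a b ha hb hab => ?_⟩
  have hfinite : ∀ {s : ℝ}, 0 ≤ s → rho φ (fun i => s * x i) ≠ ⊤ :=
    fun hs => (rho_const_mul_lt_top hfin hδ hx hs).ne
  have hA := ENNReal.mul_ne_top ENNReal.ofReal_ne_top (hfinite hμ) (a := ENNReal.ofReal a)
  have hB := ENNReal.mul_ne_top ENNReal.ofReal_ne_top (hfinite hν) (a := ENNReal.ofReal b)
  calc rhoRay φ x (a • μ + b • ν)
      ≤ (ENNReal.ofReal a * rho φ (fun i => μ * x i)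
          + ENNReal.ofReal b * rho φ (fun i => ν * x i)).toReal :=
        ENNReal.toReal_mono (ENNReal.add_ne_top.2 ⟨hA, hB⟩)
          (rho_convex_comb φ x hμ hν ha hb hab)
    _ = a • rhoRay φ x μ + b • rhoRay φ x ν := by
        rw [ENNReal.toReal_add hA hB, ENNReal.toReal_mul, ENNReal.toReal_mul,
          ENNReal.toReal_ofReal ha, ENNReal.toReal_ofReal hb]
        rfl

section ConvexOnIci

variable {g : ℝ → ℝ}

lemma ConvexOn.apply_mul_le_mul_of_map_zero (hconv : ConvexOn ℝ (Ici 0) g) (hg0 : g 0 = 0)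
    {t s : ℝ} (ht0 : 0 ≤ t) (ht1 : t ≤ 1) (hs : 0 ≤ s) : g (t * s) ≤ t * g s := by
  have h := hconv.2 (mem_Ici.2 le_rfl) (mem_Ici.2 hs) (sub_nonneg.2 ht1) ht0 (by ring)
  simpa [hg0] using h

lemma ConvexOn.monotoneOn_of_map_zero (hconv : ConvexOn ℝ (Ici 0) g) (hg0 : g 0 = 0)
    (hg : ∀ s, 0 ≤ s → 0 ≤ g s) : MonotoneOn g (Ici 0) := by
  intro u hu v hv huv
  rcases (mem_Ici.1 hu |>.trans huv).eq_or_lt with rfl | hv0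
  · rw [le_antisymm huv hu]
  · have ht : u / v ≤ 1 := (div_le_one hv0).2 huv
    calc g u = g (u / v * v) := by rw [div_mul_cancel₀ _ hv0.ne']
      _ ≤ u / v * g v := hconv.apply_mul_le_mul_of_map_zero hg0 (div_nonneg hu hv0.le) ht hv
      _ ≤ g v := mul_le_of_le_one_left (hg v hv) ht

lemma ConvexOn.sInf_setOf_inv_le_one_eq_one_iff (hconv : ConvexOn ℝ (Ici 0) g) (hg0 : g 0 = 0)
    (hg : ∀ s, 0 ≤ s → 0 ≤ g s) :
    sInf {lam : ℝ | 0 < lam ∧ g lam⁻¹ ≤ 1} = 1 ↔ g 1 = 1 := by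
  set S := {lam : ℝ | 0 < lam ∧ g lam⁻¹ ≤ 1}
  have hmono := hconv.monotoneOn_of_map_zero hg0 hg
  have hcont : ContinuousAt g 1 :=
    hconv.continuousOn_interior.continuousAt (by simp [Ioi_mem_nhds])
  have hbdd : BddBelow S := ⟨0, fun _ h => h.1.le⟩
  constructor
  · intro hS
    have hne : S.Nonempty := by
      by_contra h
      rw [not_nonempty_iff_eq_empty.1 h, Real.sInf_empty] at hS
      exact zero_ne_one hS
    have hbelow : ∀ s ∈ Ioo (0 : ℝ) 1, g s ≤ 1 := by
      rintro s ⟨hs0, hs1⟩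
      obtain ⟨μ, ⟨hμ0, hμ⟩, hμs⟩ :=
        exists_lt_of_csInf_lt hne (hS.trans_lt ((one_lt_inv₀ hs0).2 hs1))
      exact (hmono hs0.le (inv_nonneg.2 hμ0.le) ((le_inv_comm₀ hs0 hμ0).2 hμs.le)).trans hμ
    have hleft : Tendsto g (𝓝[<] 1) (𝓝 (g 1)) := hcont.tendsto.mono_left nhdsWithin_le_nhds
    refine le_antisymm (le_of_tendsto hleft ?_) ?_
    · filter_upwards [Ioo_mem_nhdsLT zero_lt_one] using hbelow
    · by_contra! hlt
      have hright : Tendsto g (𝓝[>] 1) (𝓝 (g 1)) := hcont.tendsto.mono_left nhdsWithin_le_nhds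
      obtain ⟨s, hs, hs1⟩ :=
        ((hright.eventually (Iio_mem_nhds hlt)).and self_mem_nhdsWithin).exists
      have hmem : s⁻¹ ∈ S := ⟨inv_pos.2 (one_pos.trans hs1), by rw [inv_inv]; exact hs.le⟩
      have := hS ▸ csInf_le hbdd hmem
      exact (inv_lt_one_of_one_lt₀ hs1).not_ge this
  · intro h1
    refine IsLeast.csInf_eq ⟨⟨one_pos, by simp [h1]⟩, fun lam ⟨hlam, hle⟩ => ?_⟩
    by_contra! hlt
    have := hconv.apply_mul_le_mul_of_map_zero hg0 hlam.le hlt.le (inv_nonneg.2 hlam.le)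
    rw [mul_inv_cancel₀ hlam.ne', h1] at this
    nlinarith

end ConvexOnIci

lemma luxNorm_eq_sInf_rhoRay {φ : OrliczFunction} (hfin : FiniteValued φ) (hδ : Delta2Zero φ)
    {x : ℕ → ℝ} (hx : x ∈ cesOrlicz φ) :
    luxNorm φ x = sInf {lam : ℝ | 0 < lam ∧ rhoRay φ x lam⁻¹ ≤ 1} := by
  refine congrArg sInf (Set.ext fun lam => and_congr_right fun hlam => ?_)
  have hne := (rho_const_mul_lt_top hfin hδ hx (inv_nonneg.2 hlam.le)).ne
  simp only [rhoRay, div_eq_inv_mul]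
  rw [← ENNReal.toReal_le_toReal hne ENNReal.one_ne_top, ENNReal.toReal_one]

theorem stmt_11_general (φ : OrliczFunction) (hfin : FiniteValued φ) (hδ : Delta2Zero φ)
    (x : ℕ → ℝ) (hx : x ∈ cesOrlicz φ) :
    luxNorm φ x = 1 ↔ rho φ x = 1 := by
  rw [luxNorm_eq_sInf_rhoRay hfin hδ hx,
    (convexOn_rhoRay hfin hδ hx).sInf_setOf_inv_le_one_eq_one_iff (rhoRay_zero φ x)
      fun _ _ => ENNReal.toReal_nonneg]
  simp only [rhoRay, one_mul, ENNReal.toReal_eq_one_iff]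

/-- if `φ ∈ Δ₂(0)` then for `x ∈ ces_φ`, `‖x‖_φ = 1 ↔ ρ_φ(x) = 1`. -/
theorem stmt_11 (φ : OrliczFunction) (hfin : FiniteValued φ) (hδ : Delta2Zero φ)
    (htail : TailFinite φ) (x : ℕ → ℝ) (hx : x ∈ cesOrlicz φ) :
    luxNorm φ x = 1 ↔ rho φ x = 1 :=
  stmt_11_general φ hfin hδ x hx
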